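/- Let A ∈ ℝ^{k×p} and B ∈ ℝ^{k×p} be matrices such that Aᵀ B = 0 and A Bᵀ = 0 (i.e., their row spaces and column spaces are orthogonal). Then the nuclear norm is additive: ‖A + B‖_* = ‖A‖_* + ‖B‖_*. -/

import Mathlib

open Matrix BigOperators

noncomputable def frobNorm {k p : ℕ} (A : Matrix (Fin k) (Fin p) ℝ) : ℝ :=
  Real.sqrt (∑ i, ∑ j, (A i j) ^ 2)

noncomputable def singVal {k p : ℕ} (A : Matrix (Fin k) (Fin p) ℝ) (i : Fin p) : ℝ :=
  Real.sqrt ((show (Aᵀ * A).IsHermitian by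
    simpa [Matrix.conjTranspose_eq_transpose_of_trivial] using
      Matrix.isHermitian_conjTranspose_mul_self A).eigenvalues i)

noncomputable def nuclearNorm {k p : ℕ} (A : Matrix (Fin k) (Fin p) ℝ) : ℝ :=
  ∑ i, singVal A i

noncomputable def opNorm {k p : ℕ} (A : Matrix (Fin k) (Fin p) ℝ) : ℝ :=
  ⨆ i, singVal A i

noncomputable def euclNorm {n : ℕ} (v : Fin n → ℝ) : ℝ :=
  Real.sqrt (∑ i, (v i) ^ 2)

/-!
The nuclear norm of `A` is `tr √(AᵀA)`. Orthogonality of `A` and `B` makes the Gram matrix of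
`A + B` split as `AᵀA + BᵀB` with `(AᵀA)(BᵀB) = 0`, and positive semidefinite matrices with zero
product have additive square roots, since then `√P √Q = 0` and `(√P + √Q)² = P + Q`. Taking
traces gives the claim.
-/

open scoped MatrixOrder ComplexOrder

namespace Matrix

variable {𝕜 m n : Type*} [RCLike 𝕜] [Fintype n]

lemma IsHermitian.mul_eq_zero_comm {P Q : Matrix n n 𝕜} (hP : P.IsHermitian)
    (hQ : Q.IsHermitian) (h : P * Q = 0) : Q * P = 0 := by
  rw [← hP.eq, ← hQ.eq, ← conjTranspose_mul, h, conjTranspose_zero]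

lemma posSemidef_transpose_mul_self [Fintype m] (A : Matrix m n ℝ) : (Aᵀ * A).PosSemidef := by
  simpa using posSemidef_conjTranspose_mul_self A

variable [DecidableEq n]

lemma IsHermitian.trace_cfc {A : Matrix n n 𝕜} (hA : A.IsHermitian) (f : ℝ → ℝ) :
    (cfc f A).trace = ∑ i, (f (hA.eigenvalues i) : 𝕜) := by
  rw [hA.cfc_eq, IsHermitian.cfc, Unitary.conjStarAlgAut_apply, trace_mul_cycle,
    Unitary.coe_star_mul_self, Matrix.one_mul, trace_diagonal]
  rfl

lemma PosSemidef.trace_sqrt {A : Matrix n n 𝕜} (hA : A.PosSemidef) :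
    (CFC.sqrt A).trace = ∑ i, (√(hA.1.eigenvalues i) : 𝕜) := by
  rw [CFC.sqrt_eq_cfc, cfc_nnreal_eq_real _ A, hA.1.trace_cfc]
  simp [max_eq_left (hA.eigenvalues_nonneg _)]

lemma isHermitian_sqrt (A : Matrix n n 𝕜) : (CFC.sqrt A).IsHermitian :=
  (CFC.sqrt_nonneg A).posSemidef.isHermitian

lemma mul_sqrt_eq_zero_of_mul_eq_zero {X : Matrix m n 𝕜} {Q : Matrix n n 𝕜}
    (hQ : Q.PosSemidef) (h : X * Q = 0) : X * CFC.sqrt Q = 0 := by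
  have hS := (isHermitian_sqrt Q).eq
  have := (mul_conjTranspose_mul_self_eq_zero (CFC.sqrt Q) X).mp
    (by rwa [hS, CFC.sqrt_mul_sqrt_self Q hQ.nonneg])
  rwa [hS] at this

lemma PosSemidef.sqrt_mul_sqrt_eq_zero {P Q : Matrix n n 𝕜} (hP : P.PosSemidef)
    (hQ : Q.PosSemidef) (h : P * Q = 0) : CFC.sqrt P * CFC.sqrt Q = 0 := by
  have hPS : P * CFC.sqrt Q = 0 := mul_sqrt_eq_zero_of_mul_eq_zero hQ h
  have hSP : CFC.sqrt Q * P = 0 := hP.1.mul_eq_zero_comm (isHermitian_sqrt Q) hPS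
  exact (isHermitian_sqrt Q).mul_eq_zero_comm (isHermitian_sqrt P)
    (mul_sqrt_eq_zero_of_mul_eq_zero hP hSP)

lemma PosSemidef.sqrt_add_of_mul_eq_zero {P Q : Matrix n n 𝕜} (hP : P.PosSemidef)
    (hQ : Q.PosSemidef) (h : P * Q = 0) :
    CFC.sqrt (P + Q) = CFC.sqrt P + CFC.sqrt Q := by
  have hPQ := hP.sqrt_mul_sqrt_eq_zero hQ h
  have hQP := (isHermitian_sqrt P).mul_eq_zero_comm (isHermitian_sqrt Q) hPQ
  refine CFC.sqrt_unique ?_ (add_nonneg (CFC.sqrt_nonneg P) (CFC.sqrt_nonneg Q))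
  rw [add_mul, mul_add, mul_add, CFC.sqrt_mul_sqrt_self P hP.nonneg,
    CFC.sqrt_mul_sqrt_self Q hQ.nonneg, hPQ, hQP, add_zero, zero_add]

end Matrix

lemma nuclearNorm_eq_trace_sqrt {k p : ℕ} (A : Matrix (Fin k) (Fin p) ℝ) :
    nuclearNorm A = (CFC.sqrt (Aᵀ * A)).trace :=
  (posSemidef_transpose_mul_self A).trace_sqrt.symm

theorem stmt_3 {k p : ℕ} (A B : Matrix (Fin k) (Fin p) ℝ)
    (h1 : Aᵀ * B = 0) (h2 : A * Bᵀ = 0) :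
    nuclearNorm (A + B) = nuclearNorm A + nuclearNorm B := by
  have hGram : (A + B)ᵀ * (A + B) = Aᵀ * A + Bᵀ * B := by
    have h1' : Bᵀ * A = 0 := by simpa using congrArg transpose h1
    rw [transpose_add, Matrix.add_mul, Matrix.mul_add, Matrix.mul_add, h1, h1', add_zero,
      zero_add]
  have hOrth : (Aᵀ * A) * (Bᵀ * B) = 0 := by
    rw [Matrix.mul_assoc, ← Matrix.mul_assoc A, h2, Matrix.zero_mul, Matrix.mul_zero]
  rw [nuclearNorm_eq_trace_sqrt, nuclearNorm_eq_trace_sqrt, nuclearNorm_eq_trace_sqrt, hGram,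
    (posSemidef_transpose_mul_self A).sqrt_add_of_mul_eq_zero
      (posSemidef_transpose_mul_self B) hOrth, trace_add]
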